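/- arXiv:math/0509040 — 6 statements merged into one kernel-verified Lean document; each statement's English description precedes it below -/
import Mathlib

section
/- The Kaplansky superalgebra K3 is simple: it has no proper nonzero graded ideals and K3² ≠ 0. -/
open scoped BigOperators

namespace KJ
variable (F : Type*) [Field F]

/-- Kaplansky superalgebra `K3`: basis `0 = e` (even), `1 = x`, `2 = y` (odd). -/
def x0 : Fin 3 → F := Pi.single 0 1
def x1 : Fin 3 → F := Pi.single 1 1
def x2 : Fin 3 → F := Pi.single 2 1

/-- Multiplication table of `K3`. -/
def T3 : Fin 3 → Fin 3 → Fin 3 → F :=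
  ![![x0 F, (2:F)⁻¹ • x1 F, (2:F)⁻¹ • x2 F],
    ![(2:F)⁻¹ • x1 F, 0, x0 F],
    ![(2:F)⁻¹ • x2 F, -(x0 F), 0]]

/-- Product of `K3`, extended bilinearly from the table. -/
def mul3 (u v : Fin 3 → F) : Fin 3 → F := ∑ i, ∑ j, (u i * v j) • T3 F i j

/-- Parity of the basis elements of `K3`. -/
def p3 : Fin 3 → ZMod 2 := ![0, 1, 1]

/-- The sign `(-1)^a` for `a : ZMod 2`. -/
def sg : ZMod 2 → F := fun a => if a = 0 then 1 else -1

/-- Projection onto the even part of `K3`. -/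
def evenP3 (u : Fin 3 → F) : Fin 3 → F := fun i => if p3 i = 0 then u i else 0

/-- An element of `K3` is homogeneous of degree `α`. -/
def IsHom3 (u : Fin 3 → F) (α : ZMod 2) : Prop := ∀ i, p3 i ≠ α → u i = 0

end KJ
open KJ

lemma mul3_eval (F : Type*) [Field F] (u v : Fin 3 → F) :
    mul3 F u v = ![u 0 * v 0 + u 1 * v 2 - u 2 * v 1,
                   (2:F)⁻¹ * (u 0 * v 1 + u 1 * v 0),
                   (2:F)⁻¹ * (u 0 * v 2 + u 2 * v 0)] := by
  funext i
  fin_cases i <;>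
    simp [mul3, Fin.sum_univ_three, T3, x0, x1, x2, Pi.single, Function.update,
      Matrix.vecHead, Matrix.vecTail] <;> ring

lemma top_of_x0_mem (F : Type*) [Field F] (h2 : (2:F) ≠ 0)
    (I : Submodule F (Fin 3 → F))
    (hMul : ∀ a : Fin 3 → F, ∀ u ∈ I, mul3 F a u ∈ I)
    (hx0 : x0 F ∈ I) : I = ⊤ := by
  have hx1 : x1 F ∈ I := by
    have h := hMul (x1 F) (x0 F) hx0
    have he : mul3 F (x1 F) (x0 F) = (2:F)⁻¹ • x1 F := by
      rw [mul3_eval]; funext i; fin_cases i <;> simp [x0, x1, Pi.single, Function.update]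
    have := I.smul_mem (2:F) (he ▸ h)
    rwa [smul_smul, mul_inv_cancel₀ h2, one_smul] at this
  have hx2 : x2 F ∈ I := by
    have h := hMul (x2 F) (x0 F) hx0
    have he : mul3 F (x2 F) (x0 F) = (2:F)⁻¹ • x2 F := by
      rw [mul3_eval]; funext i; fin_cases i <;> simp [x0, x2, Pi.single, Function.update]
    have := I.smul_mem (2:F) (he ▸ h)
    rwa [smul_smul, mul_inv_cancel₀ h2, one_smul] at this
  rw [Submodule.eq_top_iff']
  intro v
  have hv : v = v 0 • x0 F + v 1 • x1 F + v 2 • x2 F := by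
    funext i; fin_cases i <;> simp [x0, x1, x2, Pi.single, Function.update]
  rw [hv]
  exact I.add_mem (I.add_mem (I.smul_mem _ hx0) (I.smul_mem _ hx1)) (I.smul_mem _ hx2)

open KJ in
/-- The Kaplansky superalgebra `K3` is simple: it has no proper
nonzero graded ideals and `K3² ≠ 0`. -/
theorem k3_is_simple (F : Type*) [Field F] (h2 : (2:F) ≠ 0) :
    (∀ I : Submodule F (Fin 3 → F),
      (∀ u ∈ I, evenP3 F u ∈ I) →
      (∀ a : Fin 3 → F, ∀ u ∈ I, mul3 F a u ∈ I) →
      I = ⊥ ∨ I = ⊤) ∧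
    (∃ u v : Fin 3 → F, mul3 F u v ≠ 0) := by
  constructor
  · intro I hEven hMul
    by_cases hI : I = ⊥
    · exact Or.inl hI
    right
    obtain ⟨u, huI, hu0⟩ := Submodule.exists_mem_ne_zero_of_ne_bot hI
    by_cases h0 : u 0 = 0
    · -- odd part case: get x0 via multiplication
      by_cases h1 : u 1 = 0
      · have h2' : u 2 ≠ 0 := by
          intro h2'
          apply hu0
          funext i; fin_cases i <;> assumption
        have hm := hMul (x1 F) u huI
        have he : mul3 F (x1 F) u = u 2 • x0 F := by
          rw [mul3_eval]; funext i
          fin_cases i <;> simp [x0, x1, Pi.single, Function.update, h0]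
        have hx0 : x0 F ∈ I := by
          have := I.smul_mem (u 2)⁻¹ (he ▸ hm)
          rwa [smul_smul, inv_mul_cancel₀ h2', one_smul] at this
        exact top_of_x0_mem F h2 I hMul hx0
      · have hm := hMul (x2 F) u huI
        have he : mul3 F (x2 F) u = (-(u 1)) • x0 F := by
          rw [mul3_eval]; funext i
          fin_cases i <;> simp [x0, x2, Pi.single, Function.update, h0]
        have hx0 : x0 F ∈ I := by
          have := I.smul_mem (-(u 1))⁻¹ (he ▸ hm)
          rwa [smul_smul, inv_mul_cancel₀ (neg_ne_zero.mpr h1), one_smul] at this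
        exact top_of_x0_mem F h2 I hMul hx0
    · have hev := hEven u huI
      have he : evenP3 F u = u 0 • x0 F := by
        funext i; fin_cases i <;> simp [evenP3, p3, x0, Pi.single, Function.update]
      have hx0 : x0 F ∈ I := by
        have := I.smul_mem (u 0)⁻¹ (he ▸ hev)
        rwa [smul_smul, inv_mul_cancel₀ h0, one_smul] at this
      exact top_of_x0_mem F h2 I hMul hx0
  · refine ⟨x0 F, x0 F, fun h => ?_⟩
    have : mul3 F (x0 F) (x0 F) 0 = 1 := by
      rw [mul3_eval]; simp [x0, Pi.single]
    rw [h] at this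
    simp at this
end

section
/- For any f ∈ Sp(W), where W is the 2-dimensional odd part of K3 with its symplectic form, the linear map f̃ : K3 → K3 defined by f̃(e) = e and f̃(w) = f(w) for w ∈ W is an automorphism of the superalgebra K3. Conversely, every graded automorphism of K3 arises this way; hence Aut(K3) ≅ Sp(W) = SL₂(F). -/
open scoped BigOperators

namespace KJ
variable (F : Type*) [Field F]

/-- The symplectic form on `W = (K3)₁` with `⟨x,y⟩ = 1`. -/
def omg (u v : Fin 2 → F) : F := u 0 * v 1 - u 1 * v 0

/-- The extension `f̃` of a map `f : W → W` to `K3 = Fe ⊕ W` fixing `e`. -/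
def tilde (f : (Fin 2 → F) → (Fin 2 → F)) (u : Fin 3 → F) : Fin 3 → F :=
  ![u 0, f ![u 1, u 2] 0, f ![u 1, u 2] 1]

end KJ
namespace KJaux
open KJ
variable (F : Type*) [Field F]

lemma mul3_apply (u v : Fin 3 → F) : mul3 F u v =
    ![u 0 * v 0 + u 1 * v 2 - u 2 * v 1,
      (2:F)⁻¹ * (u 0 * v 1 + u 1 * v 0),
      (2:F)⁻¹ * (u 0 * v 2 + u 2 * v 0)] := by
  funext i
  fin_cases i <;>
    simp [mul3, Fin.sum_univ_succ, T3, x0, x1, x2, Pi.single] <;> ring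

/-- embedding of W into K3 as odd part -/
def emb : (Fin 2 → F) →ₗ[F] (Fin 3 → F) where
  toFun w := ![0, w 0, w 1]
  map_add' w w' := by funext i; fin_cases i <;> simp
  map_smul' c w := by funext i; fin_cases i <;> simp

def proj : (Fin 3 → F) →ₗ[F] (Fin 2 → F) where
  toFun u := ![u 1, u 2]
  map_add' u u' := by funext i; fin_cases i <;> simp
  map_smul' c u := by funext i; fin_cases i <;> simp

end KJaux

open KJaux in
open KJ in
/-- For `f ∈ Sp(W)` the extension `f̃` (fixing `e`) is an
automorphism of the superalgebra `K3`; the assignment `f ↦ f̃` is injective, and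
every graded automorphism of `K3` arises this way.  Hence `Aut(K3) ≅ Sp(W)`. -/
theorem aut_k3_eq_sp (F : Type*) [Field F] (h2 : (2:F) ≠ 0) :
    (∀ f : (Fin 2 → F) →ₗ[F] (Fin 2 → F),
      (∀ u v, omg F (f u) (f v) = omg F u v) →
      Function.Bijective (tilde F ⇑f) ∧
      (∀ u v, tilde F ⇑f (mul3 F u v) = mul3 F (tilde F ⇑f u) (tilde F ⇑f v))) ∧
    (∀ f g : (Fin 2 → F) →ₗ[F] (Fin 2 → F), tilde F ⇑f = tilde F ⇑g → f = g) ∧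
    (∀ φ : (Fin 3 → F) →ₗ[F] (Fin 3 → F), Function.Bijective φ →
      (∀ u v, φ (mul3 F u v) = mul3 F (φ u) (φ v)) →
      (∀ u, evenP3 F u = u → evenP3 F (φ u) = φ u) →
      (∀ u, evenP3 F u = 0 → evenP3 F (φ u) = 0) →
      ∃ f : (Fin 2 → F) →ₗ[F] (Fin 2 → F),
        (∀ u v, omg F (f u) (f v) = omg F u v) ∧ ⇑φ = tilde F ⇑f) := by
  refine ⟨?_, ?_, ?_⟩
  · -- Part 1
    intro f hsymp
    set a := f ![1, 0] 0 with ha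
    set c := f ![1, 0] 1 with hc
    set b := f ![0, 1] 0 with hb
    set d := f ![0, 1] 1 with hd
    have hf : ∀ w : Fin 2 → F, f w = ![a * w 0 + b * w 1, c * w 0 + d * w 1] := by
      intro w
      have hw : w = w 0 • ![(1:F), 0] + w 1 • ![(0:F), 1] := by
        funext i; fin_cases i <;> simp
      rw [hw, map_add, map_smul, map_smul]
      funext i; fin_cases i <;> simp [ha, hb, hc, hd] <;> ring
    have hdet : a * d - b * c = 1 := by
      have h := hsymp ![(1:F), 0] ![(0:F), 1]
      simp [omg] at h
      rw [← ha, ← hb, ← hc, ← hd] at h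
      linear_combination h
    have htf : ∀ u : Fin 3 → F, tilde F ⇑f u =
        ![u 0, a * u 1 + b * u 2, c * u 1 + d * u 2] := by
      intro u
      funext i; fin_cases i <;> simp [tilde, hf]
    constructor
    · refine Function.bijective_iff_has_inverse.mpr
        ⟨fun u => ![u 0, d * u 1 - b * u 2, -c * u 1 + a * u 2], ?_, ?_⟩
      · intro u
        rw [htf]
        funext i
        fin_cases i
        · simp
        · simp; linear_combination u 1 * hdet
        · simp; linear_combination u 2 * hdet
      · intro u
        rw [htf ![u 0, d * u 1 - b * u 2, -c * u 1 + a * u 2]]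
        funext i
        fin_cases i
        · simp
        · simp; linear_combination u 1 * hdet
        · simp; linear_combination u 2 * hdet
    · intro u v
      rw [htf, mul3_apply, mul3_apply, htf u, htf v]
      funext i
      fin_cases i
      · simp; linear_combination (u 2 * v 1 - u 1 * v 2) * hdet
      · simp; ring
      · simp; ring
  · -- Part 2: injectivity
    intro f g h
    apply LinearMap.ext
    intro w
    have h0 := congrFun h ![0, w 0, w 1]
    have h1 := congrFun h0 1
    have h2' := congrFun h0 2
    simp [tilde] at h1 h2'
    have hw : (![w 0, w 1] : Fin 2 → F) = w := by funext i; fin_cases i <;> rfl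
    rw [hw] at h1 h2'
    funext i; fin_cases i <;> assumption
  · -- Part 3
    intro φ hbij hmul heven hodd
    have hx0even : evenP3 F (x0 F) = x0 F := by
      funext i; fin_cases i <;> simp [evenP3, p3, x0, Pi.single]
    have hφx0 := heven (x0 F) hx0even
    have hφ1 : φ (x0 F) 1 = 0 := by
      have := congrFun hφx0 1
      simpa [evenP3, p3] using this.symm
    have hφ2 : φ (x0 F) 2 = 0 := by
      have := congrFun hφx0 2
      simpa [evenP3, p3] using this.symm
    have hx0sq : mul3 F (x0 F) (x0 F) = x0 F := by
      rw [mul3_apply]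
      funext i; fin_cases i <;> simp [x0, Pi.single]
    set t := φ (x0 F) 0 with ht
    have htsq : t = t * t := by
      have h := hmul (x0 F) (x0 F)
      rw [hx0sq, mul3_apply] at h
      have := congrFun h 0
      simpa [hφ1, hφ2, ht] using this
    have htne : t ≠ 0 := by
      intro h0
      have hz : φ (x0 F) = φ 0 := by
        rw [map_zero]
        funext i; fin_cases i <;> simp [hφ1, hφ2, ← ht, h0]
      have := congrFun (hbij.1 hz) 0
      simp [x0, Pi.single] at this
    have ht1 : t = 1 := by
      have h' : t * 1 = t * t := by rw [mul_one]; exact htsq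
      exact (mul_left_cancel₀ htne h').symm
    have hφx0eq : φ (x0 F) = x0 F := by
      funext i
      fin_cases i
      · show φ (x0 F) 0 = x0 F 0
        rw [← ht, ht1]; simp [x0, Pi.single]
      · show φ (x0 F) 1 = x0 F 1
        rw [hφ1]; simp [x0, Pi.single]
      · show φ (x0 F) 2 = x0 F 2
        rw [hφ2]; simp [x0, Pi.single]
    -- odd elements map to odd
    have hoddemb : ∀ w : Fin 2 → F, φ ![0, w 0, w 1] 0 = 0 := by
      intro w
      have hev : evenP3 F ![(0:F), w 0, w 1] = 0 := by
        funext i; fin_cases i <;> simp [evenP3, p3]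
      have := congrFun (hodd _ hev) 0
      simpa [evenP3, p3] using this
    refine ⟨(proj F) ∘ₗ φ ∘ₗ (emb F), ?_, ?_⟩
    · -- symplectic
      intro u v
      have hembf : ∀ w : Fin 2 → F, φ (emb F w) = emb F ((proj F) (φ (emb F w))) := by
        intro w
        funext i; fin_cases i <;> simp [emb, proj, hoddemb w]
      have key : ∀ u v : Fin 2 → F, mul3 F (emb F u) (emb F v) = omg F u v • x0 F := by
        intro u v
        rw [mul3_apply]
        funext i; fin_cases i <;> simp [emb, omg, x0, Pi.single] <;> ring
      have h := hmul (emb F u) (emb F v)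
      rw [key, map_smul, hφx0eq, hembf u, hembf v, key] at h
      have := congrFun h 0
      simp [x0, Pi.single] at this
      simp [this]
    · -- φ = tilde f
      funext u
      have hu : u = u 0 • x0 F + emb F ![u 1, u 2] := by
        funext i; fin_cases i <;> simp [x0, emb, Pi.single]
      rw [hu, map_add, map_smul, hφx0eq]
      have h0 : φ ![0, u 1, u 2] 0 = 0 := by simpa using hoddemb ![u 1, u 2]
      funext i
      fin_cases i <;>
        simp [tilde, x0, emb, proj, Pi.single, h0]
end

section
/- The map δ : F·1 ⊕ (K3⊗K3) → F·1 ⊕ (K3⊗K3) defined by δ(1) = 1 and δ(a⊗b) = (-1)^{|a||b|} b⊗a on homogeneous tensors is an automorphism of the superalgebra F·1 ⊕ (K3⊗K3) (i.e., of K10). -/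
open scoped BigOperators

namespace KJ
variable (F : Type*) [Field F]

/-- The supersymmetric bilinear form on `K3`: `(e|e) = 1/2`, `(x|y) = 1 = -(y|x)`. -/
def kap : Fin 3 → Fin 3 → F := ![![(2:F)⁻¹, 0, 0], ![0, 0, 1], ![0, -1, 0]]

/-- Coordinates of an element of `K3 ⊗ K3`. -/
abbrev Mat (F : Type*) := Fin 3 → Fin 3 → F

/-- The Benkart-Elduque product on `F·1 ⊕ (K3 ⊗ K3)`:
`(a⊗b)(c⊗d) = (-1)^{|b||c|} (ac ⊗ bd - (3/4)(a|c)(b|d)·1)`, `1` being the identity. -/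
def mulBE (u v : F × Mat F) : F × Mat F :=
  ( u.1 * v.1 + ∑ i, ∑ j, ∑ k, ∑ l,
      u.2 i j * v.2 k l * sg F (p3 j * p3 k) * (-(3:F)/4 * kap F i k * kap F j l),
    fun r s => u.1 * v.2 r s + v.1 * u.2 r s +
      ∑ i, ∑ j, ∑ k, ∑ l,
        u.2 i j * v.2 k l * sg F (p3 j * p3 k) * T3 F i k r * T3 F j l s )

/-- Homogeneity of degree `α` in `F·1 ⊕ (K3 ⊗ K3)`. -/
def IsHomBE (u : F × Mat F) (α : ZMod 2) : Prop :=
  (α = 1 → u.1 = 0) ∧ ∀ i j, p3 i + p3 j ≠ α → u.2 i j = 0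

/-- Even elements of `F·1 ⊕ (K3 ⊗ K3)`. -/
def IsEvenBE (u : F × Mat F) : Prop := ∀ i j, p3 i + p3 j ≠ 0 → u.2 i j = 0

/-- Odd elements of `F·1 ⊕ (K3 ⊗ K3)`. -/
def IsOddBE (u : F × Mat F) : Prop := u.1 = 0 ∧ ∀ i j, p3 i + p3 j ≠ 1 → u.2 i j = 0

end KJ
namespace KJ
variable (F : Type*) [Field F]

/-- The exchange map `δ : 1 ↦ 1`, `a⊗b ↦ (-1)^{|a||b|} b⊗a` on `F·1 ⊕ (K3 ⊗ K3)`. -/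
def deltaBE (u : F × Mat F) : F × Mat F :=
  (u.1, fun i j => sg F (p3 i * p3 j) * u.2 j i)

end KJ

/-! The product of `K3` and its form `kap` are even, so a term `u i j * v k l` of a product
contributes to the coordinate `(r, s)` only when `|s| = |i| + |k|` and `|r| = |j| + |l|` (to the
scalar part only when `|i| = |k|` and `|j| = |l|`). On such terms the Koszul signs of `δ(uv)` and
of `δ(u) δ(v)` agree by the identity `(|j| + |l|)(|i| + |k|) + |j||k| = |j||i| + |l||k| + |i||l|`
in `ZMod 2`. Since `δ` is an involution it is bijective. -/

theorem sum_sum_sum_sum_swap {ι M : Type*} [Fintype ι] [AddCommMonoid M] (f : ι → ι → ι → ι → M) :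
    ∑ i, ∑ j, ∑ k, ∑ l, f j i l k = ∑ i, ∑ j, ∑ k, ∑ l, f i j k l := by
  rw [Finset.sum_comm]
  exact Finset.sum_congr rfl fun _ _ => Finset.sum_congr rfl fun _ _ => Finset.sum_comm

namespace KJ
variable (F : Type*) [Field F]

theorem zmod_two_eq_zero_or_one (a : ZMod 2) : a = 0 ∨ a = 1 := by
  revert a; decide

theorem sg_add (a b : ZMod 2) : sg F (a + b) = sg F a * sg F b := by
  rcases zmod_two_eq_zero_or_one a with rfl | rfl <;>
    rcases zmod_two_eq_zero_or_one b with rfl | rfl <;>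
    simp [sg, show (1 : ZMod 2) + 1 = 0 from rfl]

theorem sg_mul_self (a : ZMod 2) : sg F a * sg F a = 1 := by
  rw [← sg_add, CharTwo.add_self_eq_zero]
  simp [sg]

theorem sg_mul_add_mul_add_mul (a b c d : ZMod 2) :
    sg F ((b + d) * (a + c)) * sg F (b * c) = sg F (b * a) * sg F (d * c) * sg F (a * d) := by
  simp only [← sg_add]
  congr 1
  revert a b c d
  decide

variable {F}

theorem p3_eq_add_of_T3_ne_zero {i k r : Fin 3} (h : T3 F i k r ≠ 0) : p3 r = p3 i + p3 k := by
  fin_cases i <;> fin_cases k <;> fin_cases r <;> simp_all [T3, x0, x1, x2, p3] <;> decide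

theorem p3_eq_of_kap_ne_zero {i k : Fin 3} (h : kap F i k ≠ 0) : p3 i = p3 k := by
  fin_cases i <;> fin_cases k <;> simp_all [kap, p3]

theorem deltaBE_smul_add (c : F) (u v : F × Mat F) :
    deltaBE F (c • u + v) = c • deltaBE F u + deltaBE F v := by
  refine Prod.ext rfl (funext₂ fun i j => ?_)
  simp only [deltaBE, Prod.snd_add, Prod.smul_snd, Pi.add_apply, Pi.smul_apply, smul_eq_mul]
  ring

theorem deltaBE_involutive : Function.Involutive (deltaBE F) := by
  refine fun u => Prod.ext rfl (funext₂ fun i j => ?_)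
  change sg F (p3 i * p3 j) * (sg F (p3 j * p3 i) * u.2 i j) = u.2 i j
  rw [mul_comm (p3 j), ← mul_assoc, sg_mul_self, one_mul]

theorem deltaBE_mulBE_fst (u v : F × Mat F) :
    (deltaBE F (mulBE F u v)).1 = (mulBE F (deltaBE F u) (deltaBE F v)).1 := by
  simp only [deltaBE, mulBE]
  rw [← sum_sum_sum_sum_swap]
  refine congrArg _ (Finset.sum_congr rfl fun i _ => Finset.sum_congr rfl fun j _ =>
    Finset.sum_congr rfl fun k _ => Finset.sum_congr rfl fun l _ => ?_)
  by_cases hik : kap F i k = 0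
  · simp [hik]
  by_cases hjl : kap F j l = 0
  · simp [hjl]
  rw [← p3_eq_of_kap_ne_zero hik, ← p3_eq_of_kap_ne_zero hjl, mul_comm (p3 j) (p3 i)]
  linear_combination (-(u.2 j i * v.2 l k * sg F (p3 i * p3 j)) * (-3 / 4 * kap F i k * kap F j l)) *
    sg_mul_self F (p3 i * p3 j)

theorem deltaBE_mulBE_snd (u v : F × Mat F) (r s : Fin 3) :
    (deltaBE F (mulBE F u v)).2 r s = (mulBE F (deltaBE F u) (deltaBE F v)).2 r s := by
  simp only [deltaBE, mulBE, mul_add, Finset.mul_sum]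
  refine congrArg₂ (· + ·) (by ring) ?_
  conv_rhs => rw [← sum_sum_sum_sum_swap]
  refine Finset.sum_congr rfl fun i _ => Finset.sum_congr rfl fun j _ =>
    Finset.sum_congr rfl fun k _ => Finset.sum_congr rfl fun l _ => ?_
  by_cases hiks : T3 F i k s = 0
  · simp [hiks]
  by_cases hjlr : T3 F j l r = 0
  · simp [hjlr]
  rw [p3_eq_add_of_T3_ne_zero hiks, p3_eq_add_of_T3_ne_zero hjlr]
  linear_combination (u.2 i j * v.2 k l * T3 F i k s * T3 F j l r) *
    sg_mul_add_mul_add_mul F (p3 i) (p3 j) (p3 k) (p3 l)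

theorem deltaBE_mulBE (u v : F × Mat F) :
    deltaBE F (mulBE F u v) = mulBE F (deltaBE F u) (deltaBE F v) :=
  Prod.ext (deltaBE_mulBE_fst u v) (funext₂ (deltaBE_mulBE_snd u v))

end KJ

open KJ in
theorem delta_is_automorphism_general (F : Type*) [Field F] :
    (∀ (c : F) (u v : F × Mat F), deltaBE F (c • u + v) = c • deltaBE F u + deltaBE F v) ∧
    Function.Bijective (deltaBE F) ∧
    (∀ u v : F × Mat F, deltaBE F (mulBE F u v) = mulBE F (deltaBE F u) (deltaBE F v)) :=
  ⟨deltaBE_smul_add, deltaBE_involutive.bijective, deltaBE_mulBE⟩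

open KJ in
/-- The map `δ : λ1 + a⊗b ↦ λ1 + (-1)^{|a||b|} b⊗a` is an
automorphism of the superalgebra `F·1 ⊕ (K3 ⊗ K3)` (i.e. of `K10`). -/
theorem delta_is_automorphism (F : Type*) [Field F]
    (h2 : (2:F) ≠ 0) (h3 : (3:F) ≠ 0) :
    (∀ (c : F) (u v : F × Mat F), deltaBE F (c • u + v) = c • deltaBE F u + deltaBE F v) ∧
    Function.Bijective (deltaBE F) ∧
    (∀ u v : F × Mat F, deltaBE F (mulBE F u v) = mulBE F (deltaBE F u) (deltaBE F v)) :=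
  delta_is_automorphism_general F
end

section
/- The group homomorphism Ψ̃ : (Sp(W)×Sp(W)) ⋊ C₂ → O(V,b) sending (f,g) to f⊗g and the generator ε of C₂ to the map s⊗t ↦ −t⊗s, is surjective with kernel {(id,id), (−id,−id)}, provided every element of F is a square. -/
open scoped BigOperators

namespace KJ
variable (F : Type*) [Field F]

/-- Gram matrix of the symplectic form `⟨,⟩` on `W` in the basis `x, y`. -/
def Omg : Fin 2 → Fin 2 → F := ![![0, 1], ![-1, 0]]

/-- The symmetric bilinear form `b(s⊗t, u⊗v) = ⟨s,u⟩⟨t,v⟩` on `V = W ⊗ W`,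
coordinates being matrices `Fin 2 → Fin 2 → F`. -/
def bV (A B : Fin 2 → Fin 2 → F) : F :=
  ∑ i, ∑ j, ∑ k, ∑ l, A i j * B k l * Omg F i k * Omg F j l

end KJ
namespace KJ
variable (F : Type*) [Field F]

/-- The map `f ⊗ g` on `V = W ⊗ W` in matrix coordinates. -/
def tmap (f g : (Fin 2 → F) → (Fin 2 → F)) (A : Fin 2 → Fin 2 → F) :
    Fin 2 → Fin 2 → F :=
  fun i j => ∑ k, ∑ l, A k l * f (Pi.single k 1) i * g (Pi.single l 1) j

/-- The map `ε̂ : s ⊗ t ↦ -t ⊗ s` on `V = W ⊗ W`. -/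
def epsV (A : Fin 2 → Fin 2 → F) : Fin 2 → Fin 2 → F := fun i j => -(A j i)

end KJ

/-!
In matrix coordinates `V = M₂(F)`, the map `f ⊗ g` is `A ↦ F A Gᵀ` with `F, G` the matrices of
`f, g`, the map `ε̂` is `A ↦ -Aᵀ`, and `b(A, B) = det (A + B) - det A - det B`. So, as `2 ≠ 0`, a
linear map is `b`-orthogonal iff it preserves `det`, and `f` is symplectic iff `det F = 1`.

Surjectivity is Frobenius' theorem on determinant preservers of `M₂(F)`: they are `A ↦ L A R` or
`A ↦ L Aᵀ R` with `det L · det R = 1`. Composed with `φ(1)⁻¹` a preserver fixes `1`, hence also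
preserves the trace, so it sends `E₁₁` to an idempotent, which a conjugation moves back to `E₁₁`.
A preserver fixing `E₁₁` and `E₂₂` fixes diagonal entries, and then `det` forces `E₁₂, E₂₁` to go
to multiples of `E₁₂, E₂₁` or of `E₂₁, E₁₂`. Writing `det L = d²`, the pair `(L / d, d Rᵀ)` is
symplectic.

For the kernel, `L A R = A` for all `A` makes `L` central, a scalar `c` with `c² = det L = 1`;
and `ε̂` never lies in it since transposition reverses products, so it is no `A ↦ L A R`.
-/

namespace Matrix

lemma transpose_eq_neg_one {α n : Type*} [NegZeroClass α] [One α] [DecidableEq n]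
    {M : Matrix n n α} : Mᵀ = -1 ↔ M = -1 := by
  rw [← transpose_inj, transpose_transpose, transpose_neg, transpose_one]

variable {R : Type*} [CommRing R] {n : Type*} [Fintype n] [DecidableEq n]

/-- Frobenius' normal form of a linear determinant preserver. -/
def IsFrobeniusForm (φ : Matrix n n R → Matrix n n R) : Prop :=
  ∃ L M : Matrix n n R, L.det * M.det = 1 ∧ ((∀ A, φ A = L * A * M) ∨ (∀ A, φ A = L * Aᵀ * M))

lemma IsFrobeniusForm.mul_mul {φ : Matrix n n R → Matrix n n R} (hφ : IsFrobeniusForm φ)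
    {U V : Matrix n n R} (hUV : U.det * V.det = 1) : IsFrobeniusForm fun A => U * φ A * V := by
  obtain ⟨L, M, hLM, hform⟩ := hφ
  refine ⟨U * L, M * V, ?_, hform.imp (fun h A => ?_) (fun h A => ?_)⟩
  · rw [det_mul, det_mul]
    linear_combination U.det * V.det * hLM + hUV
  · simp only [h, Matrix.mul_assoc]
  · simp only [h, Matrix.mul_assoc]

lemma det_add_one_fin_two (A : Matrix (Fin 2) (Fin 2) R) : (A + 1).det = A.det + A.trace + 1 := by
  simp only [det_fin_two, trace_fin_two, add_apply, one_apply_eq, one_apply_ne, ne_eq,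
    zero_ne_one, one_ne_zero, not_false_eq_true, add_zero]
  ring

section Frobenius

variable {F : Type*} [Field F]

lemma exists_mul_eq_mul_of_trace_eq_one_of_det_eq_zero {e : Matrix (Fin 2) (Fin 2) F}
    (htr : e.trace = 1) (hdet : e.det = 0) :
    ∃ P : Matrix (Fin 2) (Fin 2) F, IsUnit P.det ∧ e * P = P * !![1, 0; 0, 0] := by
  -- `e` is idempotent; the columns of `P` are a vector fixed by `e` and one killed by `e`.
  rw [trace_fin_two] at htr
  rw [det_fin_two] at hdet
  rw [eta_fin_two e]
  by_cases hc : e 1 0 = 0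
  · rw [hc, mul_zero, sub_zero] at hdet
    have h11 : e 1 1 = 1 - e 0 0 := by linear_combination htr
    rw [h11] at hdet ⊢
    rcases mul_eq_zero.mp hdet with ha | ha
    · refine ⟨!![e 0 1, 1; 1, 0], by simp [det_fin_two_of], ?_⟩
      rw [hc, ha]
      ext i j; fin_cases i <;> fin_cases j <;> simp
    · have ha : e 0 0 = 1 := by linear_combination -ha
      refine ⟨!![1, -e 0 1; 0, 1], by simp [det_fin_two_of], ?_⟩
      rw [hc, ha]
      ext i j; fin_cases i <;> fin_cases j <;> simp
  · refine ⟨!![e 0 0, e 1 1; e 1 0, -e 1 0], ?_, ?_⟩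
    · rw [det_fin_two_of, isUnit_iff_ne_zero]
      intro h
      exact hc (by linear_combination -h - e 1 0 * htr)
    · ext i j
      fin_cases i <;> fin_cases j <;>
        simp only [Fin.zero_eta, Fin.mk_one, Fin.isValue, mul_apply, Fin.sum_univ_two, of_apply,
          cons_val', cons_val_zero, cons_val_one, cons_val_fin_one, mul_zero, mul_one, add_zero]
      · linear_combination e 0 0 * htr - hdet
      · linear_combination hdet
      · linear_combination e 1 0 * htr
      · ring

lemma diag_map_eq_of_map_single {ψ : Matrix (Fin 2) (Fin 2) F →ₗ[F] Matrix (Fin 2) (Fin 2) F}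
    (hψ : ∀ A, (ψ A).det = A.det) (h₀ : ψ !![1, 0; 0, 0] = !![1, 0; 0, 0])
    (h₁ : ψ !![0, 0; 0, 1] = !![0, 0; 0, 1]) (A : Matrix (Fin 2) (Fin 2) F) :
    ψ A 0 0 = A 0 0 ∧ ψ A 1 1 = A 1 1 := by
  have k₀ (B : Matrix (Fin 2) (Fin 2) F) : (B + !![1, 0; 0, 0]).det = B.det + B 1 1 := by
    simp only [det_fin_two, add_apply, of_apply, cons_val', cons_val_zero, cons_val_one,
      cons_val_fin_one, add_zero]
    ring
  have k₁ (B : Matrix (Fin 2) (Fin 2) F) : (B + !![0, 0; 0, 1]).det = B.det + B 0 0 := by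
    simp only [det_fin_two, add_apply, of_apply, cons_val', cons_val_zero, cons_val_one,
      cons_val_fin_one, add_zero]
    ring
  have e₀ := hψ (A + !![1, 0; 0, 0])
  have e₁ := hψ (A + !![0, 0; 0, 1])
  rw [map_add, h₀, k₀, k₀, hψ, add_right_inj] at e₀
  rw [map_add, h₁, k₁, k₁, hψ, add_right_inj] at e₁
  exact ⟨e₁, e₀⟩

lemma exists_map_eq_of_map_single
    {ψ : Matrix (Fin 2) (Fin 2) F →ₗ[F] Matrix (Fin 2) (Fin 2) F}
    (hψ : ∀ A, (ψ A).det = A.det) (h₀ : ψ !![1, 0; 0, 0] = !![1, 0; 0, 0])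
    (h₁ : ψ !![0, 0; 0, 1] = !![0, 0; 0, 1]) :
    ∃ a b c d : F, ∀ A, ψ A = !![A 0 0, A 0 1 * a + A 1 0 * c; A 0 1 * b + A 1 0 * d, A 1 1] := by
  refine ⟨ψ !![0, 1; 0, 0] 0 1, ψ !![0, 1; 0, 0] 1 0, ψ !![0, 0; 1, 0] 0 1,
    ψ !![0, 0; 1, 0] 1 0, fun A => ?_⟩
  have hA : A = A 0 0 • !![1, 0; 0, 0] + A 0 1 • !![0, 1; 0, 0] + A 1 0 • !![0, 0; 1, 0] +
      A 1 1 • !![0, 0; 0, 1] := by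
    ext i j; fin_cases i <;> fin_cases j <;> simp
  have hX := diag_map_eq_of_map_single hψ h₀ h₁ !![0, 1; 0, 0]
  have hY := diag_map_eq_of_map_single hψ h₀ h₁ !![0, 0; 1, 0]
  simp only [of_apply, cons_val', cons_val_zero, cons_val_one, empty_val',
    cons_val_fin_one] at hX hY
  conv_lhs => rw [hA]
  simp only [map_add, map_smul, h₀, h₁]
  ext i j; fin_cases i <;> fin_cases j <;> simp [hX, hY, mul_comm]

lemma isFrobeniusForm_of_map_single {ψ : Matrix (Fin 2) (Fin 2) F →ₗ[F] Matrix (Fin 2) (Fin 2) F}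
    (hψ : ∀ A, (ψ A).det = A.det) (h₀ : ψ !![1, 0; 0, 0] = !![1, 0; 0, 0])
    (h₁ : ψ !![0, 0; 0, 1] = !![0, 0; 0, 1]) : IsFrobeniusForm ψ := by
  obtain ⟨a, b, c, d, hψA⟩ := exists_map_eq_of_map_single hψ h₀ h₁
  have hab : a * b = 0 := by simpa [hψA, det_fin_two] using hψ !![0, 1; 0, 0]
  have hcd : c * d = 0 := by simpa [hψA, det_fin_two] using hψ !![0, 0; 1, 0]
  have had : (a + c) * (b + d) = 1 := by simpa [hψA, det_fin_two] using hψ !![0, 1; 1, 0]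
  by_cases hb : b = 0
  · subst hb
    have hd : d ≠ 0 := right_ne_zero_of_mul_eq_one (by simpa using had)
    obtain rfl : c = 0 := (mul_eq_zero.mp hcd).resolve_right hd
    replace had : a * d = 1 := by simpa using had
    refine ⟨!![a, 0; 0, 1], !![d, 0; 0, 1], by simpa using had, Or.inl fun A => ?_⟩
    rw [hψA]
    ext i j
    fin_cases i <;> fin_cases j <;>
      simp only [Fin.zero_eta, Fin.mk_one, Fin.isValue, mul_apply, Fin.sum_univ_two, of_apply,
        cons_val', cons_val_zero, cons_val_one, cons_val_fin_one, mul_zero, zero_mul, mul_one,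
        one_mul, add_zero, zero_add]
    · linear_combination -A 0 0 * had
    · ring
  · obtain rfl : a = 0 := (mul_eq_zero.mp hab).resolve_right hb
    have hc : c ≠ 0 := left_ne_zero_of_mul_eq_one (by simpa using had)
    obtain rfl : d = 0 := (mul_eq_zero.mp hcd).resolve_left hc
    replace had : b * c = 1 := by simpa [mul_comm] using had
    refine ⟨!![1, 0; 0, b], !![1, 0; 0, c], by simpa using had, Or.inr fun A => ?_⟩
    rw [hψA]
    ext i j
    fin_cases i <;> fin_cases j <;>
      simp only [Fin.zero_eta, Fin.mk_one, Fin.isValue, mul_apply, transpose_apply,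
        Fin.sum_univ_two, of_apply, cons_val', cons_val_zero, cons_val_one, cons_val_fin_one,
        mul_zero, zero_mul, mul_one, one_mul, add_zero, zero_add]
    · ring
    · linear_combination -A 1 1 * had

lemma isFrobeniusForm_of_map_one {ψ : Matrix (Fin 2) (Fin 2) F →ₗ[F] Matrix (Fin 2) (Fin 2) F}
    (hψ : ∀ A, (ψ A).det = A.det) (h₁ : ψ 1 = 1) : IsFrobeniusForm ψ := by
  set E : Matrix (Fin 2) (Fin 2) F := !![1, 0; 0, 0] with hE
  have hE_det : (ψ E).det = 0 := by rw [hψ, hE, det_fin_two_of]; ring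
  have hE_trace : (ψ E).trace = 1 := by
    have h := hψ (E + 1)
    rw [map_add, h₁, det_add_one_fin_two, det_add_one_fin_two, hψ, hE, det_fin_two_of,
      trace_fin_two_of] at h
    linear_combination h
  obtain ⟨P, hPu, hP⟩ := exists_mul_eq_mul_of_trace_eq_one_of_det_eq_zero hE_trace hE_det
  let ψ' := LinearMap.mulLeftRight F (P⁻¹, P) ∘ₗ ψ
  have hψ' (A : Matrix (Fin 2) (Fin 2) F) : ψ' A = P⁻¹ * ψ A * P := rfl
  have hψ'_det (A : Matrix (Fin 2) (Fin 2) F) : (ψ' A).det = A.det := by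
    rw [hψ', det_conj' ((isUnit_iff_isUnit_det P).mpr hPu), hψ]
  have hψ'_E : ψ' E = E := by
    rw [hψ', Matrix.mul_assoc, hP, ← Matrix.mul_assoc, nonsing_inv_mul _ hPu, Matrix.one_mul]
  have hψ'_E' : ψ' !![0, 0; 0, 1] = !![0, 0; 0, 1] := by
    have h1E : (!![0, 0; 0, 1] : Matrix (Fin 2) (Fin 2) F) = 1 - E := by
      rw [hE, one_fin_two]; simp
    rw [h1E, map_sub, hψ', h₁, Matrix.mul_one, nonsing_inv_mul _ hPu, hψ'_E]
  have hψψ' : ⇑ψ = fun A => P * ψ' A * P⁻¹ := by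
    ext A : 1
    rw [hψ', ← Matrix.mul_assoc, mul_nonsing_inv_cancel_left _ _ hPu,
      mul_nonsing_inv_cancel_right _ _ hPu]
  rw [hψψ']
  refine (isFrobeniusForm_of_map_single hψ'_det hψ'_E hψ'_E').mul_mul ?_
  rw [mul_comm]
  exact det_nonsing_inv_mul_det _ hPu

theorem isFrobeniusForm_of_det_map_eq
    (φ : Matrix (Fin 2) (Fin 2) F →ₗ[F] Matrix (Fin 2) (Fin 2) F)
    (hφ : ∀ A, (φ A).det = A.det) : IsFrobeniusForm φ := by
  set Q := φ 1 with hQ_def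
  have hQ : Q.det = 1 := by rw [hQ_def, hφ, det_one]
  have hQu : IsUnit Q.det := hQ ▸ isUnit_one
  let ψ := LinearMap.mulLeft F Q⁻¹ ∘ₗ φ
  have hψ (A : Matrix (Fin 2) (Fin 2) F) : ψ A = Q⁻¹ * φ A := rfl
  have hψ_det (A : Matrix (Fin 2) (Fin 2) F) : (ψ A).det = A.det := by
    rw [hψ, det_mul, det_nonsing_inv, hQ, Ring.inverse_one, one_mul, hφ]
  have hψ_one : ψ 1 = 1 := by rw [hψ, ← hQ_def, nonsing_inv_mul _ hQu]
  have hφψ : ⇑φ = fun A => Q * ψ A * 1 := by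
    ext A : 1
    rw [hψ, Matrix.mul_one, mul_nonsing_inv_cancel_left _ _ hQu]
  rw [hφψ]
  exact (isFrobeniusForm_of_map_one hψ_det hψ_one).mul_mul (by rw [hQ, det_one, one_mul])

end Frobenius

lemma mem_range_scalar_of_forall_mul_mul_eq {L M : Matrix n n R} (h : ∀ A, L * A * M = A) :
    L ∈ Set.range (scalar n) ∧ L * M = 1 := by
  have hLM : L * M = 1 := by simpa using h 1
  have hML : M * L = 1 := mul_eq_one_comm.mp hLM
  refine ⟨mem_range_scalar_iff_commute_single'.mpr fun i j => ?_, hLM⟩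
  calc single i j 1 * L = L * single i j 1 * M * L := by rw [h]
    _ = L * single i j 1 := by rw [Matrix.mul_assoc, hML, Matrix.mul_one]

lemma not_forall_mul_transpose_mul_eq [Nontrivial R] [Nontrivial n] (L M : Matrix n n R) :
    ¬ ∀ A, L * Aᵀ * M = A := by
  intro h
  have hT (A : Matrix n n R) : L * A * M = Aᵀ := by simpa using h Aᵀ
  have hLM : L * M = 1 := by simpa using hT 1
  have hML : M * L = 1 := mul_eq_one_comm.mp hLM
  have hcomm (A B : Matrix n n R) : A * B = B * A := by
    calc A * B = (Bᵀ * Aᵀ)ᵀ := by rw [transpose_mul, transpose_transpose, transpose_transpose]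
      _ = L * (Bᵀ * Aᵀ) * M := (hT _).symm
      _ = L * Bᵀ * (M * L) * Aᵀ * M := by rw [hML, Matrix.mul_one]; simp only [Matrix.mul_assoc]
      _ = (L * Bᵀ * M) * (L * Aᵀ * M) := by simp only [Matrix.mul_assoc]
      _ = B * A := by rw [hT, hT, transpose_transpose, transpose_transpose]
  obtain ⟨i, j, hij⟩ := exists_pair_ne n
  have := congrFun₂ (hcomm (single i j 1) (single j i 1)) i i
  simp [hij] at this

lemma forall_mul_mul_eq_self_iff_fin_two [NoZeroDivisors R] {L M : Matrix (Fin 2) (Fin 2) R}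
    (hL : L.det = 1) : (∀ A, L * A * M = A) ↔ (L = 1 ∧ M = 1) ∨ (L = -1 ∧ M = -1) := by
  refine ⟨fun h => ?_, ?_⟩
  · obtain ⟨⟨c, rfl⟩, hLM⟩ := mem_range_scalar_of_forall_mul_mul_eq h
    obtain rfl | rfl : c = 1 ∨ c = -1 := by simpa [det_fin_two] using hL
    · exact Or.inl (by simpa using hLM)
    · rw [map_neg, map_one, Matrix.neg_mul, Matrix.one_mul, neg_eq_iff_eq_neg] at hLM
      exact Or.inr ⟨by rw [map_neg, map_one], hLM⟩
  · rintro (⟨rfl, rfl⟩ | ⟨rfl, rfl⟩) A <;> simp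

end Matrix

namespace LinearMap

variable {R : Type*} [CommRing R] {n : Type*} [Fintype n] [DecidableEq n]

lemma toMatrix'_eq_one_iff {f : (n → R) →ₗ[R] (n → R)} : toMatrix' f = 1 ↔ ∀ u, f u = u := by
  rw [← toMatrix'_id, toMatrix'.injective.eq_iff, LinearMap.ext_iff]
  rfl

lemma toMatrix'_eq_neg_one_iff {f : (n → R) →ₗ[R] (n → R)} :
    toMatrix' f = -1 ↔ ∀ u, f u = -u := by
  rw [← toMatrix'_id, ← map_neg, toMatrix'.injective.eq_iff, LinearMap.ext_iff]
  rfl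

end LinearMap

namespace KJ

open Matrix

variable {F : Type*} [Field F]

lemma omg_mulVec (M : Matrix (Fin 2) (Fin 2) F) (u v : Fin 2 → F) :
    omg F (M *ᵥ u) (M *ᵥ v) = M.det * omg F u v := by
  simp only [omg, mulVec, dotProduct, Fin.sum_univ_two, det_fin_two]
  ring

lemma omg_apply_apply_eq_iff_det (f : (Fin 2 → F) →ₗ[F] (Fin 2 → F)) :
    (∀ u v, omg F (f u) (f v) = omg F u v) ↔ (LinearMap.toMatrix' f).det = 1 := by
  simp only [← LinearMap.toMatrix'_mulVec, omg_mulVec]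
  refine ⟨fun h => ?_, fun h u v => by rw [h, one_mul]⟩
  simpa [omg] using h (Pi.single 0 1) (Pi.single 1 1)

lemma of_tmap (f g : (Fin 2 → F) →ₗ[F] (Fin 2 → F)) (A : Fin 2 → Fin 2 → F) :
    of (tmap F f g A) = LinearMap.toMatrix' f * of A * (LinearMap.toMatrix' g)ᵀ := by
  ext i j
  simp only [tmap, of_apply, mul_apply, transpose_apply, LinearMap.toMatrix'_apply,
    Fin.sum_univ_two]
  ring

lemma of_epsV (A : Fin 2 → Fin 2 → F) : of (epsV F A) = -(of A)ᵀ := rfl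

lemma bV_eq (A B : Fin 2 → Fin 2 → F) :
    bV F A B = (of A + of B).det - (of A).det - (of B).det := by
  simp only [bV, Omg, Fin.sum_univ_two, det_fin_two, Matrix.add_apply, of_apply, cons_val',
    cons_val_zero, cons_val_one, cons_val_fin_one]
  ring

lemma bV_self (A : Fin 2 → Fin 2 → F) : bV F A A = 2 * (of A).det := by
  rw [bV_eq, ← two_smul F (of A), det_smul, Fintype.card_fin]
  ring

lemma exists_of_tmap_eq_mul_mul (hsq : ∀ c : F, ∃ d : F, d * d = c)
    {L R : Matrix (Fin 2) (Fin 2) F} (h : L.det * R.det = 1) :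
    ∃ f g : (Fin 2 → F) →ₗ[F] (Fin 2 → F),
      (∀ u v, omg F (f u) (f v) = omg F u v) ∧ (∀ u v, omg F (g u) (g v) = omg F u v) ∧
        ∀ A, of (tmap F f g A) = L * of A * R := by
  obtain ⟨d, hd⟩ := hsq L.det
  have hd₀ : d ≠ 0 := by
    rintro rfl
    rw [← hd, zero_mul, zero_mul] at h
    exact zero_ne_one h
  refine ⟨toLin' (d⁻¹ • L), toLin' (d • Rᵀ), ?_, ?_, fun A => ?_⟩
  · rw [omg_apply_apply_eq_iff_det, LinearMap.toMatrix'_toLin', det_smul, Fintype.card_fin, ← hd]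
    field_simp
  · rw [omg_apply_apply_eq_iff_det, LinearMap.toMatrix'_toLin', det_smul, Fintype.card_fin,
      det_transpose]
    linear_combination R.det * hd + h
  · rw [of_tmap, LinearMap.toMatrix'_toLin', LinearMap.toMatrix'_toLin', transpose_smul,
      transpose_transpose, Matrix.smul_mul, Matrix.smul_mul, Matrix.mul_smul, smul_smul,
      inv_mul_cancel₀ hd₀, one_smul]

lemma exists_of_tmap_epsV_eq_mul_transpose_mul (hsq : ∀ c : F, ∃ d : F, d * d = c)
    {L R : Matrix (Fin 2) (Fin 2) F} (h : L.det * R.det = 1) :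
    ∃ f g : (Fin 2 → F) →ₗ[F] (Fin 2 → F),
      (∀ u v, omg F (f u) (f v) = omg F u v) ∧ (∀ u v, omg F (g u) (g v) = omg F u v) ∧
        ∀ A, of (tmap F f g (epsV F A)) = L * (of A)ᵀ * R := by
  obtain ⟨f, g, hf, hg, hfg⟩ := exists_of_tmap_eq_mul_mul hsq (L := -L) (R := R)
    (by rwa [det_neg, Fintype.card_fin, neg_one_sq, one_mul])
  refine ⟨f, g, hf, hg, fun A => ?_⟩
  rw [hfg, of_epsV, Matrix.neg_mul, Matrix.mul_neg, neg_neg]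

lemma bV_tmap_tmap {f g : (Fin 2 → F) →ₗ[F] (Fin 2 → F)}
    (hf : ∀ u v, omg F (f u) (f v) = omg F u v) (hg : ∀ u v, omg F (g u) (g v) = omg F u v)
    (A B : Fin 2 → Fin 2 → F) : bV F (tmap F f g A) (tmap F f g B) = bV F A B := by
  rw [omg_apply_apply_eq_iff_det] at hf hg
  have hdet (C : Matrix (Fin 2) (Fin 2) F) :
      (LinearMap.toMatrix' f * C * (LinearMap.toMatrix' g)ᵀ).det = C.det := by
    rw [det_mul, det_mul, det_transpose, hf, hg, one_mul, mul_one]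
  rw [bV_eq, bV_eq, of_tmap, of_tmap, ← Matrix.add_mul, ← Matrix.mul_add, hdet, hdet, hdet]

lemma bV_epsV_epsV (A B : Fin 2 → Fin 2 → F) : bV F (epsV F A) (epsV F B) = bV F A B := by
  have hdet (C : Matrix (Fin 2) (Fin 2) F) : (-Cᵀ).det = C.det := by simp [det_neg]
  rw [bV_eq, bV_eq, of_epsV, of_epsV, ← neg_add, ← transpose_add, hdet, hdet, hdet]

lemma exists_tmap_of_bV_map_eq (h2 : (2 : F) ≠ 0) (hsq : ∀ c : F, ∃ d : F, d * d = c)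
    (φ : (Fin 2 → Fin 2 → F) →ₗ[F] (Fin 2 → Fin 2 → F))
    (hφ : ∀ A B, bV F (φ A) (φ B) = bV F A B) :
    ∃ f g : (Fin 2 → F) →ₗ[F] (Fin 2 → F),
      (∀ u v, omg F (f u) (f v) = omg F u v) ∧ (∀ u v, omg F (g u) (g v) = omg F u v) ∧
        (⇑φ = tmap F f g ∨ ⇑φ = fun A => tmap F f g (epsV F A)) := by
  have hdet (A : Fin 2 → Fin 2 → F) : (of (φ A)).det = (of A).det := by
    have h := hφ A A
    rw [bV_self, bV_self] at h
    exact mul_left_cancel₀ h2 h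
  obtain ⟨L, R, hLR, hform | hform⟩ := isFrobeniusForm_of_det_map_eq φ hdet
  · obtain ⟨f, g, hf, hg, hfg⟩ := exists_of_tmap_eq_mul_mul hsq hLR
    exact ⟨f, g, hf, hg, Or.inl (funext fun A => (hform A).trans (hfg A).symm)⟩
  · obtain ⟨f, g, hf, hg, hfg⟩ := exists_of_tmap_epsV_eq_mul_transpose_mul hsq hLR
    exact ⟨f, g, hf, hg, Or.inr (funext fun A => (hform A).trans (hfg A).symm)⟩

lemma forall_tmap_eq_self_iff {f g : (Fin 2 → F) →ₗ[F] (Fin 2 → F)}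
    (hf : ∀ u v, omg F (f u) (f v) = omg F u v) :
    (∀ A, tmap F f g A = A) ↔
      ((∀ u, f u = u) ∧ (∀ u, g u = u)) ∨ ((∀ u, f u = -u) ∧ (∀ u, g u = -u)) := by
  rw [omg_apply_apply_eq_iff_det] at hf
  calc (∀ A, tmap F f g A = A)
      ↔ ∀ A, LinearMap.toMatrix' f * of A * (LinearMap.toMatrix' g)ᵀ = of A :=
        forall_congr' fun A => by rw [← of_tmap, EmbeddingLike.apply_eq_iff_eq]
    _ ↔ ∀ A, LinearMap.toMatrix' f * A * (LinearMap.toMatrix' g)ᵀ = A :=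
        of.forall_congr_right (q := fun A => _ * A * _ = A)
    _ ↔ _ := by
      rw [forall_mul_mul_eq_self_iff_fin_two hf, transpose_eq_one, transpose_eq_neg_one,
        LinearMap.toMatrix'_eq_one_iff, LinearMap.toMatrix'_eq_one_iff,
        LinearMap.toMatrix'_eq_neg_one_iff, LinearMap.toMatrix'_eq_neg_one_iff]

lemma not_forall_tmap_epsV_eq_self (f g : (Fin 2 → F) →ₗ[F] (Fin 2 → F)) :
    ¬ ∀ A, tmap F f g (epsV F A) = A := fun h =>
  not_forall_mul_transpose_mul_eq (-LinearMap.toMatrix' f) (LinearMap.toMatrix' g)ᵀ fun A => by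
    have hA := congrArg of (h (of.symm A))
    rw [of_tmap, of_epsV, Equiv.apply_symm_apply] at hA
    simpa using hA

end KJ

open KJ in
/-- The homomorphism `Ψ̃ : (Sp(W) × Sp(W)) ⋊ C₂ → O(V,b)`,
`(f,g) ↦ f⊗g`, `ε ↦ (s⊗t ↦ -t⊗s)`, is well defined (its values are orthogonal),
surjective, and has kernel `{(id,id), (-id,-id)}`, provided `F² = F`. -/
theorem wreath_onto_orthogonal (F : Type*) [Field F] (h2 : (2:F) ≠ 0)
    (hsq : ∀ c : F, ∃ d : F, d * d = c) :
    -- values of Ψ̃ lie in O(V,b)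
    (∀ f g : (Fin 2 → F) →ₗ[F] (Fin 2 → F),
      (∀ u v, omg F (f u) (f v) = omg F u v) →
      (∀ u v, omg F (g u) (g v) = omg F u v) →
      (∀ A B, bV F (tmap F ⇑f ⇑g A) (tmap F ⇑f ⇑g B) = bV F A B)) ∧
    (∀ A B, bV F (epsV F A) (epsV F B) = bV F A B) ∧
    -- surjectivity
    (∀ φ : (Fin 2 → Fin 2 → F) →ₗ[F] (Fin 2 → Fin 2 → F), Function.Bijective φ →
      (∀ A B, bV F (φ A) (φ B) = bV F A B) →
      ∃ f g : (Fin 2 → F) →ₗ[F] (Fin 2 → F),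
        (∀ u v, omg F (f u) (f v) = omg F u v) ∧
        (∀ u v, omg F (g u) (g v) = omg F u v) ∧
        (⇑φ = tmap F ⇑f ⇑g ∨ ⇑φ = fun A => tmap F ⇑f ⇑g (epsV F A))) ∧
    -- kernel
    (∀ f g : (Fin 2 → F) →ₗ[F] (Fin 2 → F),
      (∀ u v, omg F (f u) (f v) = omg F u v) →
      (∀ u v, omg F (g u) (g v) = omg F u v) →
      (((∀ A, tmap F ⇑f ⇑g A = A) ↔
          ((∀ u, f u = u) ∧ (∀ u, g u = u)) ∨ ((∀ u, f u = -u) ∧ (∀ u, g u = -u))) ∧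
        ¬ (∀ A, tmap F ⇑f ⇑g (epsV F A) = A))) := by
  refine ⟨fun f g hf hg => bV_tmap_tmap hf hg, bV_epsV_epsV,
    fun φ _ hφ => exists_tmap_of_bV_map_eq h2 hsq φ hφ,
    fun f g hf _ => ⟨forall_tmap_eq_self_iff hf, not_forall_tmap_epsV_eq_self f g⟩⟩
end

section
/- In the realization K10 = F·1 ⊕ (K3⊗K3), the subspace F·1 ⊕ (M⊗K3), where M = Fe + Fx is the maximal subalgebra of K3, is a maximal graded subalgebra of K10; under the Benkart–Elduque isomorphism it corresponds to the span of {e, f, a+b (up to the identification), c₁, p₁, q₁, p₂+q₂}-type subalgebra, namely span{1, e⊗e, x⊗x, x⊗y, e⊗x, x⊗e, e⊗y}. -/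
open scoped BigOperators

namespace KJ
variable (F : Type*) [Field F]

/-- Projection onto the even part of `F·1 ⊕ (K3 ⊗ K3)`. -/
def evenPBE (u : F × Mat F) : F × Mat F :=
  (u.1, fun i j => if p3 i + p3 j = 0 then u.2 i j else 0)

/-- A graded subalgebra of `K10 = F·1 ⊕ (K3 ⊗ K3)`. -/
def GradedSubalgBE (S : Submodule F (F × Mat F)) : Prop :=
  (∀ u ∈ S, ∀ v ∈ S, mulBE F u v ∈ S) ∧ (∀ u ∈ S, evenPBE F u ∈ S)

/-- A maximal (proper) graded subalgebra of `K10 = F·1 ⊕ (K3 ⊗ K3)`. -/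
def MaxGradedSubalgBE (S : Submodule F (F × Mat F)) : Prop :=
  GradedSubalgBE F S ∧ S ≠ ⊤ ∧
  ∀ C : Submodule F (F × Mat F), GradedSubalgBE F C → S ≤ C → C = S ∨ C = ⊤

end KJ
namespace KJ
variable (F : Type*) [Field F]

/-- The element `1` of `F·1 ⊕ (K3 ⊗ K3)`. -/
def oneBE : F × Mat F := (1, 0)

/-- The basis tensor `e_i ⊗ e_j` of `K3 ⊗ K3` inside `F·1 ⊕ (K3 ⊗ K3)`. -/
def tb (i j : Fin 3) : F × Mat F :=
  (0, fun r s => if r = i ∧ s = j then 1 else 0)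

end KJ

namespace KJ
variable (F : Type*) [Field F]

def Srow : Submodule F (F × Mat F) where
  carrier := {u : F × Mat F | ∀ j, u.2 2 j = 0}
  add_mem' := by intro a b ha hb j; simp [ha j, hb j]
  zero_mem' := by intro j; simp
  smul_mem' := by intro c a ha j; simp [ha j]

lemma decomp (u : F × Mat F) :
    u = u.1 • oneBE F + u.2 0 0 • tb F 0 0 + u.2 0 1 • tb F 0 1 + u.2 0 2 • tb F 0 2
      + u.2 1 0 • tb F 1 0 + u.2 1 1 • tb F 1 1 + u.2 1 2 • tb F 1 2
      + u.2 2 0 • tb F 2 0 + u.2 2 1 • tb F 2 1 + u.2 2 2 • tb F 2 2 := by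
  refine Prod.ext ?_ ?_
  · simp [oneBE, tb]
  · funext r s
    fin_cases r <;> fin_cases s <;> simp [oneBE, tb]

end KJ
namespace KJ
variable (F : Type*) [Field F]

lemma Srow_mul : ∀ u ∈ Srow F, ∀ v ∈ Srow F, mulBE F u v ∈ Srow F := by
  intro u hu v hv j
  have hu' : ∀ j, u.2 2 j = 0 := hu
  have hv' : ∀ j, v.2 2 j = 0 := hv
  simp only [mulBE]
  simp [Fin.sum_univ_three, hu', hv', T3, x0, x1, x2, Pi.single_apply]

lemma Srow_even : ∀ u ∈ Srow F, evenPBE F u ∈ Srow F := by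
  intro u hu j
  have hu' : ∀ j, u.2 2 j = 0 := hu
  simp [evenPBE, hu']

end KJ
namespace KJ
variable (F : Type*) [Field F]

def rw2 (c : Fin 3 → F) : F × Mat F := (0, fun r s => if r = 2 then c s else 0)

lemma z2 : (1 + 1 : ZMod 2) = 0 := rfl

lemma E1 (c : Fin 3 → F) :
    mulBE F (rw2 F c) (tb F 0 1)
      = (-(c 2) * (2:F)⁻¹) • tb F 2 0 + (c 0 * ((2:F)⁻¹ * (2:F)⁻¹)) • tb F 2 1 := by
  refine Prod.ext ?_ ?_
  · simp [mulBE, rw2, tb, Fin.sum_univ_three, kap, sg, p3, Matrix.vecHead, Matrix.vecTail]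
  · funext r s
    fin_cases r <;> fin_cases s <;>
      simp [mulBE, rw2, tb, Fin.sum_univ_three, T3, x0, x1, x2, sg, p3,
        Pi.single_apply, Matrix.vecHead, Matrix.vecTail] <;> ring

lemma E2 (c : Fin 3 → F) :
    mulBE F (rw2 F c) (tb F 0 2)
      = (c 1 * (2:F)⁻¹) • tb F 2 0 + (c 0 * ((2:F)⁻¹ * (2:F)⁻¹)) • tb F 2 2 := by
  refine Prod.ext ?_ ?_
  · simp [mulBE, rw2, tb, Fin.sum_univ_three, kap, sg, p3, Matrix.vecHead, Matrix.vecTail]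
  · funext r s
    fin_cases r <;> fin_cases s <;>
      simp [mulBE, rw2, tb, Fin.sum_univ_three, T3, x0, x1, x2, sg, p3,
        Pi.single_apply, Matrix.vecHead, Matrix.vecTail] <;> ring

lemma E3 : mulBE F (tb F 2 0) (tb F 0 1) = ((2:F)⁻¹ * (2:F)⁻¹) • tb F 2 1 := by
  refine Prod.ext ?_ ?_
  · simp [mulBE, tb, Fin.sum_univ_three, kap, sg, p3, Matrix.vecHead, Matrix.vecTail]
  · funext r s
    fin_cases r <;> fin_cases s <;>
      simp [mulBE, tb, Fin.sum_univ_three, T3, x0, x1, x2, sg, p3,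
        Pi.single_apply, Matrix.vecHead, Matrix.vecTail] <;> ring

lemma E4 : mulBE F (tb F 2 0) (tb F 0 2) = ((2:F)⁻¹ * (2:F)⁻¹) • tb F 2 2 := by
  refine Prod.ext ?_ ?_
  · simp [mulBE, tb, Fin.sum_univ_three, kap, sg, p3, Matrix.vecHead, Matrix.vecTail]
  · funext r s
    fin_cases r <;> fin_cases s <;>
      simp [mulBE, tb, Fin.sum_univ_three, T3, x0, x1, x2, sg, p3,
        Pi.single_apply, Matrix.vecHead, Matrix.vecTail] <;> ring

lemma E5 (c : Fin 3 → F) :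
    rw2 F c - evenPBE F (rw2 F c) = c 0 • tb F 2 0 := by
  refine Prod.ext ?_ ?_
  · simp [rw2, evenPBE, tb]
  · funext r s
    fin_cases r <;> fin_cases s <;> simp [rw2, evenPBE, tb, p3, z2]

end KJ
namespace KJ
variable (F : Type*) [Field F]

lemma one_mem_Srow : oneBE F ∈ Srow F := by intro j; simp [oneBE]

lemma tb_mem_Srow (i j : Fin 3) (h : ¬ (2:Fin 3) = i) : tb F i j ∈ Srow F := by
  intro s; simp [tb, h]

lemma span_eq :
    Submodule.span F
      {oneBE F, tb F 0 0, tb F 0 1, tb F 0 2, tb F 1 0, tb F 1 1, tb F 1 2}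
      = Srow F := by
  apply le_antisymm
  · rw [Submodule.span_le]
    intro x hx
    simp only [Set.mem_insert_iff, Set.mem_singleton_iff] at hx
    rcases hx with rfl|rfl|rfl|rfl|rfl|rfl|rfl
    · exact one_mem_Srow F
    all_goals exact tb_mem_Srow F _ _ (by decide)
  · intro u hu
    have h : ∀ j, u.2 2 j = 0 := hu
    have hd := decomp F u
    rw [h 0, h 1, h 2, zero_smul, zero_smul, zero_smul, add_zero, add_zero, add_zero] at hd
    rw [hd]
    refine add_mem (add_mem (add_mem (add_mem (add_mem (add_mem
      (Submodule.smul_mem _ _ (Submodule.subset_span (by simp)))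
      (Submodule.smul_mem _ _ (Submodule.subset_span (by simp))))
      (Submodule.smul_mem _ _ (Submodule.subset_span (by simp))))
      (Submodule.smul_mem _ _ (Submodule.subset_span (by simp))))
      (Submodule.smul_mem _ _ (Submodule.subset_span (by simp))))
      (Submodule.smul_mem _ _ (Submodule.subset_span (by simp))))
      (Submodule.smul_mem _ _ (Submodule.subset_span (by simp)))

lemma mem_of_smul {F : Type*} [Field F] {a : F} (ha : a ≠ 0) {t : F × Mat F}
    {C : Submodule F (F × Mat F)} (h : a • t ∈ C) : t ∈ C := by
  have := C.smul_mem a⁻¹ h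
  rwa [smul_smul, inv_mul_cancel₀ ha, one_smul] at this

end KJ
open KJ in
/-- `F·1 ⊕ (M ⊗ K3)`, with `M = Fe + Fx` the maximal
subalgebra of `K3`, is a maximal graded subalgebra of `K10 = F·1 ⊕ (K3 ⊗ K3)`;
it is the span of `{1, e⊗e, e⊗x, e⊗y, x⊗e, x⊗x, x⊗y}`. -/
theorem m_tensor_k3_maximal (F : Type*) [Field F] [IsAlgClosed F]
    (h2 : (2:F) ≠ 0) (h3 : (3:F) ≠ 0) :
    ∃ S : Submodule F (F × Mat F),
      S = Submodule.span F
        {oneBE F, tb F 0 0, tb F 0 1, tb F 0 2, tb F 1 0, tb F 1 1, tb F 1 2} ∧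
      (↑S = {u : F × Mat F | ∀ j, u.2 2 j = 0}) ∧
      MaxGradedSubalgBE F S := by
  refine ⟨Srow F, (span_eq F).symm, rfl, ⟨Srow_mul F, Srow_even F⟩, ?_, ?_⟩
  · -- properness
    intro htop
    have h : tb F 2 0 ∈ Srow F := htop ▸ Submodule.mem_top
    have h0 := h 0
    simp [tb] at h0
  · -- maximality
    intro C hC hle
    by_cases hCS : C ≤ Srow F
    · exact Or.inl (le_antisymm hCS hle)
    right
    obtain ⟨u, huC, huS⟩ := SetLike.not_le_iff_exists.mp hCS
    set c : Fin 3 → F := fun j => u.2 2 j with hc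
    -- the bottom row of u, as an element of C
    have hrw : rw2 F c ∈ C := by
      have hproj : u - rw2 F c ∈ Srow F := by
        intro j
        simp [rw2, hc]
      have hmem := C.sub_mem huC (hle hproj)
      rwa [sub_sub_cancel] at hmem
    -- tb 2 0 ∈ C
    have h20 : tb F 2 0 ∈ C := by
      by_cases h0 : c 0 ≠ 0
      · have hodd : c 0 • tb F 2 0 ∈ C := by
          rw [← E5 F c]
          exact C.sub_mem hrw (hC.2 _ hrw)
        exact mem_of_smul h0 hodd
      push_neg at h0
      have h02 : tb F 0 2 ∈ C := hle (tb_mem_Srow F 0 2 (by decide))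
      have h01 : tb F 0 1 ∈ C := hle (tb_mem_Srow F 0 1 (by decide))
      by_cases h1 : c 1 ≠ 0
      · have hw : mulBE F (rw2 F c) (tb F 0 2) ∈ C := hC.1 _ hrw _ h02
        rw [E2, h0, zero_mul, zero_smul, add_zero] at hw
        exact mem_of_smul (mul_ne_zero h1 (inv_ne_zero h2)) hw
      push_neg at h1
      have h2c : c 2 ≠ 0 := by
        have : ¬ ∀ j, u.2 2 j = 0 := huS
        push_neg at this
        obtain ⟨j, hj⟩ := this
        fin_cases j
        · exact absurd h0 hj
        · exact absurd h1 hj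
        · exact hj
      have hw : mulBE F (rw2 F c) (tb F 0 1) ∈ C := hC.1 _ hrw _ h01
      rw [E1, h0, zero_mul, zero_smul, add_zero] at hw
      exact mem_of_smul (mul_ne_zero (neg_ne_zero.mpr h2c) (inv_ne_zero h2)) hw
    have hinv2 : ((2:F)⁻¹ * (2:F)⁻¹) ≠ 0 := mul_ne_zero (inv_ne_zero h2) (inv_ne_zero h2)
    have h21 : tb F 2 1 ∈ C := by
      have hw : mulBE F (tb F 2 0) (tb F 0 1) ∈ C :=
        hC.1 _ h20 _ (hle (tb_mem_Srow F 0 1 (by decide)))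
      rw [E3] at hw
      exact mem_of_smul hinv2 hw
    have h22 : tb F 2 2 ∈ C := by
      have hw : mulBE F (tb F 2 0) (tb F 0 2) ∈ C :=
        hC.1 _ h20 _ (hle (tb_mem_Srow F 0 2 (by decide)))
      rw [E4] at hw
      exact mem_of_smul hinv2 hw
    rw [eq_top_iff]
    intro v _
    rw [decomp F v]
    refine add_mem (add_mem (add_mem (add_mem (add_mem (add_mem (add_mem (add_mem (add_mem
      (C.smul_mem _ (hle (one_mem_Srow F)))
      (C.smul_mem _ (hle (tb_mem_Srow F 0 0 (by decide)))))
      (C.smul_mem _ (hle (tb_mem_Srow F 0 1 (by decide)))))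
      (C.smul_mem _ (hle (tb_mem_Srow F 0 2 (by decide)))))
      (C.smul_mem _ (hle (tb_mem_Srow F 1 0 (by decide)))))
      (C.smul_mem _ (hle (tb_mem_Srow F 1 1 (by decide)))))
      (C.smul_mem _ (hle (tb_mem_Srow F 1 2 (by decide)))))
      (C.smul_mem _ h20))
      (C.smul_mem _ h21))
      (C.smul_mem _ h22)
end

section
/- In the realization K10 = F·1 ⊕ (K3⊗K3), the subspace F·1 + F(e⊗e) + (x⊗K3) + (K3⊗y) is a maximal graded subalgebra of K10. -/
open scoped BigOperators

namespace KJAux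
open KJ Matrix

variable (F : Type*) [Field F]

def e01 : F × Mat F := (0, ![![0,1,0],![0,0,0],![0,0,0]])
def e20 : F × Mat F := (0, ![![0,0,0],![0,0,0],![1,0,0]])
def e21 : F × Mat F := (0, ![![0,0,0],![0,0,0],![0,1,0]])
def e10 : F × Mat F := (0, ![![0,0,0],![1,0,0],![0,0,0]])
def e02 : F × Mat F := (0, ![![0,0,1],![0,0,0],![0,0,0]])
def e11 : F × Mat F := (0, ![![0,0,0],![0,1,0],![0,0,0]])
def e22 : F × Mat F := (0, ![![0,0,0],![0,0,0],![0,0,1]])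

def SS : Submodule F (F × Mat F) where
  carrier := {u | u.2 0 1 = 0 ∧ u.2 2 0 = 0 ∧ u.2 2 1 = 0}
  add_mem' := by
    rintro a b ⟨ha1, ha2, ha3⟩ ⟨hb1, hb2, hb3⟩
    refine ⟨?_, ?_, ?_⟩ <;> simp [Prod.snd_add, ha1, ha2, ha3, hb1, hb2, hb3]
  zero_mem' := by exact ⟨rfl, rfl, rfl⟩
  smul_mem' := by
    rintro c a ⟨h1, h2, h3⟩
    refine ⟨?_, ?_, ?_⟩ <;> simp [Prod.smul_snd, h1, h2, h3]

lemma mem_SS {u : F × Mat F} :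
    u ∈ SS F ↔ (u.2 0 1 = 0 ∧ u.2 2 0 = 0 ∧ u.2 2 1 = 0) := Iff.rfl

lemma e10_mem : e10 F ∈ SS F := by
  refine ⟨?_, ?_, ?_⟩ <;> simp [e10, Matrix.vecHead, Matrix.vecTail, Function.comp, Pi.zero_apply]
lemma e02_mem : e02 F ∈ SS F := by
  refine ⟨?_, ?_, ?_⟩ <;> simp [e02, Matrix.vecHead, Matrix.vecTail, Function.comp, Pi.zero_apply]
lemma e11_mem : e11 F ∈ SS F := by
  refine ⟨?_, ?_, ?_⟩ <;> simp [e11, Matrix.vecHead, Matrix.vecTail, Function.comp, Pi.zero_apply]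
lemma e22_mem : e22 F ∈ SS F := by
  refine ⟨?_, ?_, ?_⟩ <;> simp [e22, Matrix.vecHead, Matrix.vecTail, Function.comp, Pi.zero_apply]


lemma L1 (h2 : (2:F) ≠ 0) : e01 F = (2:F) • mulBE F (e21 F) (e10 F) := by
  refine Prod.ext ?_ ?_
  · simp [mulBE, e21, e10, e01, Fin.sum_univ_three, sg, p3, kap, T3, x0, x1, x2,
      Pi.single_apply, Matrix.vecHead, Matrix.vecTail, Function.comp]
  · funext r s
    simp only [mulBE, e21, e10, e01, Fin.sum_univ_three, Matrix.cons_val_zero,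
      Matrix.cons_val_one, Matrix.head_cons, Matrix.cons_val_two, Matrix.tail_cons,
      zero_mul, mul_zero, zero_add, add_zero, one_mul, mul_one, Prod.smul_snd]
    fin_cases r <;> fin_cases s <;>
      simp [sg, p3, kap, T3, x0, x1, x2, Pi.single_apply, Matrix.vecHead, Matrix.vecTail, Function.comp, Pi.zero_apply,
        inv_mul_cancel₀ h2, mul_inv_cancel₀ h2]

lemma L2 (h2 : (2:F) ≠ 0) : e20 F = (2:F) • mulBE F (e21 F) (e02 F) := by
  refine Prod.ext ?_ ?_
  · have h : (mulBE F (e21 F) (e02 F)).1 = 0 := by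
      simp [mulBE, e21, e02, Fin.sum_univ_three, sg, p3, kap, T3, x0, x1, x2,
        Pi.single_apply, Matrix.vecHead, Matrix.vecTail, Function.comp]
    simp [h, e20, Prod.smul_fst]
  · funext r s
    simp only [mulBE, e21, e02, e20, Fin.sum_univ_three, Matrix.cons_val_zero,
      Matrix.cons_val_one, Matrix.head_cons, Matrix.cons_val_two, Matrix.tail_cons,
      zero_mul, mul_zero, zero_add, add_zero, one_mul, mul_one, Prod.smul_snd]
    fin_cases r <;> fin_cases s <;>
      simp [sg, p3, kap, T3, x0, x1, x2, Pi.single_apply, Matrix.vecHead, Matrix.vecTail, Function.comp, Pi.zero_apply,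
        inv_mul_cancel₀ h2, mul_inv_cancel₀ h2]

lemma L3 (h2 : (2:F) ≠ 0) : e21 F = (2:F) • ((2:F) • mulBE F (e20 F) (e01 F)) := by
  refine Prod.ext ?_ ?_
  · have h : (mulBE F (e20 F) (e01 F)).1 = 0 := by
      simp [mulBE, e20, e01, Fin.sum_univ_three, sg, p3, kap, T3, x0, x1, x2,
        Pi.single_apply, Matrix.vecHead, Matrix.vecTail, Function.comp]
    simp [h, e21, Prod.smul_fst]
  · funext r s
    simp only [mulBE, e20, e01, e21, Fin.sum_univ_three, Matrix.cons_val_zero,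
      Matrix.cons_val_one, Matrix.head_cons, Matrix.cons_val_two, Matrix.tail_cons,
      zero_mul, mul_zero, zero_add, add_zero, one_mul, mul_one, Prod.smul_snd]
    fin_cases r <;> fin_cases s <;>
      simp [sg, p3, kap, T3, x0, x1, x2, Pi.single_apply, Matrix.vecHead, Matrix.vecTail, Function.comp, Pi.zero_apply,
        inv_mul_cancel₀ h2, mul_inv_cancel₀ h2] <;>
      field_simp

lemma L4 (a b : F) :
    mulBE F (a • e01 F + b • e20 F) (e22 F) = (-(2:F)⁻¹ * a) • e20 F := by
  refine Prod.ext ?_ ?_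
  · simp [mulBE, e20, e01, e22, Fin.sum_univ_three, sg, p3, kap, T3, x0, x1, x2,
      Pi.single_apply, Prod.snd_add, Prod.smul_snd, Prod.fst_add, Prod.smul_fst,
      Matrix.vecHead, Matrix.vecTail, Function.comp, Pi.zero_apply]
  · funext r s
    simp only [mulBE, e20, e01, e22, Fin.sum_univ_three, Matrix.cons_val_zero,
      Matrix.cons_val_one, Matrix.head_cons, Matrix.cons_val_two, Matrix.tail_cons,
      Prod.snd_add, Prod.smul_snd, Prod.fst_add, Prod.smul_fst, Pi.add_apply,
      Pi.smul_apply, smul_eq_mul,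
      zero_mul, mul_zero, zero_add, add_zero, one_mul, mul_one]
    fin_cases r <;> fin_cases s <;>
      simp [sg, p3, kap, T3, x0, x1, x2, Pi.single_apply, Matrix.vecHead,
        Matrix.vecTail] <;>
      ring

lemma L5 (a b : F) :
    mulBE F (a • e01 F + b • e20 F) (e11 F) = (-(2:F)⁻¹ * b) • e01 F := by
  refine Prod.ext ?_ ?_
  · simp [mulBE, e20, e01, e11, Fin.sum_univ_three, sg, p3, kap, T3, x0, x1, x2,
      Pi.single_apply, Prod.snd_add, Prod.smul_snd, Prod.fst_add, Prod.smul_fst,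
      Matrix.vecHead, Matrix.vecTail, Function.comp, Pi.zero_apply]
  · funext r s
    simp only [mulBE, e20, e01, e11, Fin.sum_univ_three, Matrix.cons_val_zero,
      Matrix.cons_val_one, Matrix.head_cons, Matrix.cons_val_two, Matrix.tail_cons,
      Prod.snd_add, Prod.smul_snd, Prod.fst_add, Prod.smul_fst, Pi.add_apply,
      Pi.smul_apply, smul_eq_mul,
      zero_mul, mul_zero, zero_add, add_zero, one_mul, mul_one]
    fin_cases r <;> fin_cases s <;>
      simp [sg, p3, kap, T3, x0, x1, x2, Pi.single_apply, Matrix.vecHead,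
        Matrix.vecTail] <;>
      ring

lemma L6 (a b c : F) :
    evenPBE F (a • e01 F + b • e20 F + c • e21 F) = c • e21 F := by
  refine Prod.ext ?_ ?_
  · simp [evenPBE, e01, e20, e21]
  · funext r s
    fin_cases r <;> fin_cases s <;>
      simp (config := { decide := true }) [evenPBE, e01, e20, e21, p3,
        Matrix.vecHead, Matrix.vecTail, Function.comp, Pi.zero_apply, Prod.snd_add, Prod.smul_snd]

lemma SS_mul (u v : F × Mat F) (hu : u ∈ SS F) (hv : v ∈ SS F) :
    mulBE F u v ∈ SS F := by
  obtain ⟨hu1, hu2, hu3⟩ := hu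
  obtain ⟨hv1, hv2, hv3⟩ := hv
  refine ⟨?_, ?_, ?_⟩ <;>
  · simp only [mulBE, Fin.sum_univ_three]
    simp [T3, x0, x1, x2, sg, p3, Pi.single_apply, Matrix.vecHead, Matrix.vecTail,
      Function.comp, hu1, hu2, hu3, hv1, hv2, hv3]

lemma SS_even (u : F × Mat F) (hu : u ∈ SS F) : evenPBE F u ∈ SS F := by
  obtain ⟨h1, h2, h3⟩ := hu
  exact ⟨by simp [evenPBE, h1], by simp [evenPBE, h2], by simp [evenPBE, h3]⟩

lemma decomp (u : F × Mat F) :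
    u - u.2 0 1 • e01 F - u.2 2 0 • e20 F - u.2 2 1 • e21 F ∈ SS F := by
  refine ⟨?_, ?_, ?_⟩ <;>
    simp [e01, e20, e21, Prod.snd_sub, Prod.smul_snd, Matrix.vecHead, Matrix.vecTail]

lemma top_of (C : Submodule F (F × Mat F)) (hSC : SS F ≤ C)
    (h01 : e01 F ∈ C) (h20 : e20 F ∈ C) (h21 : e21 F ∈ C) : C = ⊤ := by
  rw [eq_top_iff]
  intro u _
  have h := C.add_mem (C.add_mem (C.add_mem (hSC (decomp F u))
    (C.smul_mem (u.2 0 1) h01)) (C.smul_mem (u.2 2 0) h20)) (C.smul_mem (u.2 2 1) h21)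
  have he : u - u.2 0 1 • e01 F - u.2 2 0 • e20 F - u.2 2 1 • e21 F +
      u.2 0 1 • e01 F + u.2 2 0 • e20 F + u.2 2 1 • e21 F = u := by abel
  rwa [he] at h

lemma top_of21 (h2 : (2:F) ≠ 0) (C : Submodule F (F × Mat F))
    (hC : GradedSubalgBE F C) (hSC : SS F ≤ C) (h21 : e21 F ∈ C) : C = ⊤ := by
  have h01 : e01 F ∈ C := by
    rw [L1 F h2]; exact C.smul_mem _ (hC.1 _ h21 _ (hSC (e10_mem F)))
  have h20 : e20 F ∈ C := by
    rw [L2 F h2]; exact C.smul_mem _ (hC.1 _ h21 _ (hSC (e02_mem F)))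
  exact top_of F C hSC h01 h20 h21


lemma unscale (C : Submodule F (F × Mat F)) {x : F × Mat F} {t : F}
    (ht : t ≠ 0) (h : t • x ∈ C) : x ∈ C := by
  have := C.smul_mem t⁻¹ h
  rwa [smul_smul, inv_mul_cancel₀ ht, one_smul] at this

end KJAux

open KJAux

open KJ in
/-- In `K10 = F·1 ⊕ (K3 ⊗ K3)`, the subspace
`F·1 + F(e⊗e) + (x ⊗ K3) + (K3 ⊗ y)` is a maximal graded subalgebra.  Its
coordinate description: the entries at `e⊗x`, `y⊗e` and `y⊗x` vanish. -/
theorem x_k3_plus_k3_y_maximal (F : Type*) [Field F] [IsAlgClosed F]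
    (h2 : (2:F) ≠ 0) (h3 : (3:F) ≠ 0) :
    ∃ S : Submodule F (F × Mat F),
      (↑S = {u : F × Mat F | u.2 0 1 = 0 ∧ u.2 2 0 = 0 ∧ u.2 2 1 = 0}) ∧
      MaxGradedSubalgBE F S := by
  refine ⟨SS F, rfl, ⟨fun u hu v hv => SS_mul F u v hu hv, fun u hu => SS_even F u hu⟩, ?_, ?_⟩
  · intro h
    have hm : e01 F ∈ SS F := h ▸ Submodule.mem_top
    have : (1:F) = 0 := by simpa [e01] using hm.1
    exact one_ne_zero this
  · intro C hC hSC
    by_cases hCS : C = SS F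
    · exact Or.inl hCS
    right
    have hnle : ¬ C ≤ SS F := fun hle => hCS (le_antisymm hle hSC)
    obtain ⟨v, hvC, hvS⟩ := SetLike.not_le_iff_exists.mp hnle
    set a := v.2 0 1 with hav
    set b := v.2 2 0 with hbv
    set c := v.2 2 1 with hcv
    have habc : ¬ (a = 0 ∧ b = 0 ∧ c = 0) := fun h => hvS h
    have hw : a • e01 F + b • e20 F + c • e21 F ∈ C := by
      have hs := C.sub_mem hvC (hSC (decomp F v))
      have he : v - (v - a • e01 F - b • e20 F - c • e21 F) =
          a • e01 F + b • e20 F + c • e21 F := by abel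
      rwa [he] at hs
    have hz : c • e21 F ∈ C := by
      have := hC.2 _ hw
      rwa [L6] at this
    by_cases hc : c = 0
    · rw [hc, zero_smul, add_zero] at hw
      have m1 : (-(2:F)⁻¹ * b) • e01 F ∈ C := by
        have := hC.1 _ hw _ (hSC (e11_mem F)); rwa [L5] at this
      have m2 : (-(2:F)⁻¹ * a) • e20 F ∈ C := by
        have := hC.1 _ hw _ (hSC (e22_mem F)); rwa [L4] at this
      have hinv : -(2:F)⁻¹ ≠ 0 := neg_ne_zero.mpr (inv_ne_zero h2)
      by_cases ha : a = 0
      · have hb : b ≠ 0 := fun hb => habc ⟨ha, hb, hc⟩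
        have h01 : e01 F ∈ C := unscale F C (mul_ne_zero hinv hb) m1
        have h20 : e20 F ∈ C := by
          have hs := C.sub_mem hw (C.smul_mem a h01)
          have he : a • e01 F + b • e20 F - a • e01 F = b • e20 F := by abel
          rw [he] at hs
          exact unscale F C hb hs
        have h21 : e21 F ∈ C := by
          rw [L3 F h2]; exact C.smul_mem _ (C.smul_mem _ (hC.1 _ h20 _ h01))
        exact top_of F C hSC h01 h20 h21
      · have h20 : e20 F ∈ C := unscale F C (mul_ne_zero hinv ha) m2
        have h01 : e01 F ∈ C := by
          have hs := C.sub_mem hw (C.smul_mem b h20)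
          have he : a • e01 F + b • e20 F - b • e20 F = a • e01 F := by abel
          rw [he] at hs
          exact unscale F C ha hs
        have h21 : e21 F ∈ C := by
          rw [L3 F h2]; exact C.smul_mem _ (C.smul_mem _ (hC.1 _ h20 _ h01))
        exact top_of F C hSC h01 h20 h21
    · exact top_of21 F h2 C hC hSC (unscale F C hc hz)
end
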